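/- arXiv:1904.04786 — 3 statements merged into one kernel-verified Lean document; each statement's English description precedes it below -/
import Mathlib

section
/- Let (T, D) be any random labeled plane tree and let (T^sym, D^sym) be its symmetrization. Then for any constants k, K, M: P( sup over 0 ≤ i, j ≤ 2|T|−2 with |i−j| ≤ k of |ℓ(θ_T(i)) − ℓ(θ_T(j))| > M ) ≤ P( sup over |i−j| ≤ k of dist_T(θ_T(i), θ_T(j)) > K ) + P( sup over vertices v, w of T^sym with dist(v,w) ≤ K of |ℓ^sym(v) − ℓ^sym(w)| > M ), where ℓ, ℓ^sym are the vertex labels of (T, D) and (T^sym, D^sym). -/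
open MeasureTheory Filter Topology
open scoped ENNReal NNReal Classical

noncomputable section

namespace TreeSym

/-- Ulam–Harris words over the positive integers. -/
abbrev Vertex : Type := List ℕ+

instance : MeasurableSpace Vertex := ⊤
instance : MeasurableSpace (Finset Vertex) := ⊤

/-- A finite set of Ulam–Harris words is (the vertex set of) a rooted plane tree if it contains
the empty word, is prefix-closed, and is closed under decreasing the last letter. -/
def IsPlaneTreeSet (t : Finset Vertex) : Prop :=
  ([] : Vertex) ∈ t ∧
  (∀ v ∈ t, ∀ u : Vertex, u <+: v → u ∈ t) ∧
  (∀ v : Vertex, ∀ i j : ℕ+, v ++ [i] ∈ t → j ≤ i → v ++ [j] ∈ t)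

/-- The number of children of `v` in the vertex set `t`. -/
def nChild (t : Finset Vertex) (v : Vertex) : ℕ :=
  (t.filter fun w => ∃ i : ℕ+, w = v ++ [i]).card

/-- Length of the longest common prefix of two words. -/
def lcpLen : Vertex → Vertex → ℕ
  | a :: u, b :: v => if a = b then lcpLen u v + 1 else 0
  | _, _ => 0

/-- The graph distance between two vertices of a plane tree. -/
def treeDist (u v : Vertex) : ℕ := u.length + v.length - 2 * lcpLen u v

/-- History of the contour exploration of the plane tree with vertex set `t`
(most recently visited vertex first). -/
def contourHist (t : Finset Vertex) : ℕ → List Vertex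
  | 0 => [([] : Vertex)]
  | n + 1 =>
    let h := contourHist t n
    let cur := h.headI
    if (∃ m : ℕ, cur ++ [m.succPNat] ∈ t ∧ cur ++ [m.succPNat] ∉ h) then
      (cur ++ [(sInf {m : ℕ | cur ++ [m.succPNat] ∈ t ∧ cur ++ [m.succPNat] ∉ h}).succPNat]) :: h
    else
      cur.dropLast :: h

/-- The contour exploration `θ_t`. -/
def theta (t : Finset Vertex) (i : ℕ) : Vertex := (contourHist t i).headI

/-- Piecewise linear interpolation: `interpFun n f (i/n) = f i` for `0 ≤ i ≤ n`, linear in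
between. -/
def interpFun (n : ℕ) (f : ℕ → ℝ) (s : ℝ) : ℝ :=
  f 0 + ∑ k ∈ Finset.range n, (f (k + 1) - f k) * max 0 (min 1 (s * n - k))

lemma continuous_interpFun (n : ℕ) (f : ℕ → ℝ) : Continuous (interpFun n f) := by
  unfold interpFun
  refine continuous_const.add (continuous_finset_sum _ fun k _ => continuous_const.mul ?_)
  exact continuous_const.max (continuous_const.min
    ((continuous_id.mul continuous_const).sub continuous_const))

/-- Piecewise linear interpolation, as a continuous map on `[0,1]`. -/
def interpMap (n : ℕ) (f : ℕ → ℝ) : C(unitInterval, ℝ) :=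
  ⟨fun s => interpFun n f s, (continuous_interpFun n f).comp continuous_subtype_val⟩

/-- A multitype labeled plane tree with type space `S`: a finite set of Ulam–Harris words,
together with a type and a displacement (the label increment along the edge to the parent)
attached to each word. -/
structure MTree (S : Type*) where
  verts : Finset Vertex
  type : Vertex → S
  disp : Vertex → ℝ

/-- The underlying vertex set is a plane tree. -/
def MTree.IsPlaneTree {S : Type*} (T : MTree S) : Prop := IsPlaneTreeSet T.verts

instance {S : Type*} [MeasurableSpace S] : MeasurableSpace (MTree S) :=
  MeasurableSpace.comap (fun T => (T.verts, T.type, T.disp)) inferInstance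

/-- The label of a vertex: the sum of the displacements along the path from the root. -/
def labelOf {S : Type*} (T : MTree S) (v : Vertex) : ℝ :=
  ∑ j ∈ Finset.range v.length, T.disp (v.take (j + 1))

/-- The contour process, as a function on `ℝ`. -/
def contourFun {S : Type*} (T : MTree S) (s : ℝ) : ℝ :=
  interpFun (2 * T.verts.card - 2) (fun i => ((theta T.verts i).length : ℝ)) s

/-- The label process, as a function on `ℝ`. -/
def labelFun {S : Type*} (T : MTree S) (s : ℝ) : ℝ :=
  interpFun (2 * T.verts.card - 2) (fun i => labelOf T (theta T.verts i)) s

/-- The contour process `C` of a tree, as a continuous map on `[0,1]`. -/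
def contourProcess {S : Type*} (T : MTree S) : C(unitInterval, ℝ) :=
  interpMap (2 * T.verts.card - 2) fun i => ((theta T.verts i).length : ℝ)

/-- The label process `Z` of a labeled tree, as a continuous map on `[0,1]`. -/
def labelProcess {S : Type*} (T : MTree S) : C(unitInterval, ℝ) :=
  interpMap (2 * T.verts.card - 2) fun i => labelOf T (theta T.verts i)

/-- The process `Λ^{(q)}` counting visited vertices of type `q` along the contour. -/
def lambdaProcess {S : Type*} (q : S) (T : MTree S) : C(unitInterval, ℝ) :=
  interpMap (2 * T.verts.card - 2) fun i =>
    (((Finset.range i).filter fun j => T.type (theta T.verts j) = q).card : ℝ)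

/-! ### Symmetrization -/

/-- A vector of permutations, one for each potential vertex. -/
abbrev PermVec : Type := Vertex → Equiv.Perm ℕ+

/-- Relabel a word according to a permutation vector, the permutation used at each level being
the one attached to the (original) prefix. -/
def permWordAux (σ : PermVec) : Vertex → Vertex → Vertex
  | _, [] => []
  | p, i :: rest => σ p i :: permWordAux σ (p ++ [i]) rest

def permWord (σ : PermVec) (v : Vertex) : Vertex := permWordAux σ [] v

/-- The inverse relabeling. -/
def invWordAux (σ : PermVec) : Vertex → Vertex → Vertex
  | _, [] => []
  | p, j :: rest => (σ p)⁻¹ j :: invWordAux σ (p ++ [(σ p)⁻¹ j]) rest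

def invWord (σ : PermVec) (w : Vertex) : Vertex := invWordAux σ [] w

/-- Apply a permutation vector to a labeled multitype tree: children are reordered at every
vertex, types and displacements following their vertices and edges. -/
def permApply {S : Type*} (σ : PermVec) (T : MTree S) : MTree S :=
  ⟨T.verts.image (permWord σ), fun w => T.type (invWord σ w), fun w => T.disp (invWord σ w)⟩

/-- The set `P_t` of admissible permutation vectors for `T`: at a vertex with `k` children the
permutation fixes everything above `k` and permutes `{1,…,k}`; away from the tree it is the
identity. -/
def PermSet {S : Type*} (T : MTree S) : Set PermVec :=
  {σ | (∀ v ∈ T.verts,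
          (∀ i : ℕ+, (i : ℕ) ≤ nChild T.verts v → ((σ v i : ℕ) ≤ nChild T.verts v)) ∧
          (∀ i : ℕ+, nChild T.verts v < (i : ℕ) → σ v i = i)) ∧
        ∀ v ∉ T.verts, σ v = 1}

/-- The law of the symmetrization of the (deterministic) tree `T`: the uniform average of the
point masses at `σ(T)`, `σ ∈ P_T`. -/
def symKernel {S : Type*} [MeasurableSpace S] (T : MTree S) : Measure (MTree S) :=
  ((PermSet T).ncard : ℝ≥0∞)⁻¹ •
    Measure.sum (fun σ : ↥(PermSet T) => Measure.dirac (permApply (σ : PermVec) T))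

/-- The symmetrization `ν^sym` of a law `ν` on labeled multitype plane trees. -/
def symLaw {S : Type*} [MeasurableSpace S] (ν : Measure (MTree S)) : Measure (MTree S) :=
  ν.bind symKernel

/-- A law is symmetric if it is equal to its symmetrization. -/
def IsSymmetricLaw {S : Type*} [MeasurableSpace S] (ν : Measure (MTree S)) : Prop :=
  symLaw ν = ν

/-! ### Valid laws -/

/-- Forget the displacements of a labeled tree. -/
def shape {S : Type*} (T : MTree S) : MTree S := ⟨T.verts, T.type, fun _ => 0⟩

/-- The vector of displacements from `v` to its (first `k`) children. -/
def dispVecAt {S : Type*} (T : MTree S) (v : Vertex) (k : ℕ) : Fin k → ℝ :=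
  fun i => T.disp (v ++ [(i : ℕ).succPNat])

/-- The child type vector of `v` (with `k` children). -/
def ctypeAt {S : Type*} (T : MTree S) (v : Vertex) (k : ℕ) : Fin k → S :=
  fun i => T.type (v ++ [(i : ℕ).succPNat])

/-- A family of displacement distributions: for each parent type and each child type vector of
each length `k`, a measure on `ℝ^k`. -/
abbrev DispFamily (S : Type*) : Type _ :=
  S → (k : ℕ) → (Fin k → S) → Measure (Fin k → ℝ)

/-- `ν` has displacement family `π`: conditionally on the underlying typed tree, the displacement
vectors at the vertices are independent, with laws given by `π` evaluated at the type of a vertex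
and its child type vector. -/
def HasDispFamily {S : Type*} [MeasurableSpace S] (ν : Measure (MTree S))
    (π : DispFamily S) : Prop :=
  (∀ r k s, IsProbabilityMeasure (π r k s)) ∧
  ∀ t : MTree S, ∀ B : (v : Vertex) → Set (Fin (nChild t.verts v) → ℝ),
    (∀ v, MeasurableSet (B v)) →
    ν {T | shape T = shape t ∧ ∀ v ∈ t.verts, dispVecAt T v (nChild t.verts v) ∈ B v}
      = ν {T | shape T = shape t}
        * ∏ v ∈ t.verts, π (t.type v) (nChild t.verts v) (ctypeAt t v (nChild t.verts v)) (B v)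

/-- A law on labeled multitype plane trees is valid if it is carried by plane trees, the law of
the underlying typed plane tree is symmetric, and the displacements admit a displacement family
as above. -/
def IsValidLaw {S : Type*} [MeasurableSpace S] (ν : Measure (MTree S)) : Prop :=
  ν {T | ¬ T.IsPlaneTree} = 0 ∧ IsSymmetricLaw (ν.map shape) ∧ ∃ π : DispFamily S, HasDispFamily ν π

/-! ### Convergence in distribution -/

/-- Convergence in distribution of a sequence of random elements (defined on possibly different
probability spaces) towards a limiting random element: the expectations of every bounded
continuous functional converge. -/
def TendstoInDist {Ω : ℕ → Type*} [∀ n, MeasurableSpace (Ω n)]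
    (P : ∀ n, Measure (Ω n)) {E : Type*} [TopologicalSpace E] (X : ∀ n, Ω n → E)
    {Ω₀ : Type*} [MeasurableSpace Ω₀] (P₀ : Measure Ω₀) (Y : Ω₀ → E) : Prop :=
  ∀ f : BoundedContinuousFunction E ℝ,
    Tendsto (fun n => ∫ ω, f (X n ω) ∂(P n)) atTop (𝓝 (∫ ω, f (Y ω) ∂P₀))

/-- Tightness of a family of laws of random elements of a topological space. -/
def TightSeq {E : Type*} [TopologicalSpace E] {Ω : ℕ → Type*} [∀ n, MeasurableSpace (Ω n)]
    (P : ∀ n, Measure (Ω n)) (X : ∀ n, Ω n → E) : Prop :=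
  ∀ ε : ℝ≥0∞, 0 < ε → ∃ K : Set E, IsCompact K ∧ ∀ n, P n {ω | X n ω ∉ K} ≤ ε

/-! ### Galton–Watson laws -/

instance {S : Type*} [MeasurableSpace S] : MeasurableSpace (List S) := ⊤

/-- The child type vector of `v`, as a list. -/
def ctypeList {S : Type*} (T : MTree S) (v : Vertex) : List S :=
  (List.range (nChild T.verts v)).map fun m => T.type (v ++ [m.succPNat])

/-- `ν` is the law of a multitype Galton–Watson tree with offspring distributions `p`:
the `p s` are permutation-invariant probability measures on finite type sequences, and the
probability that the typed tree equals a given finite plane tree `t` is the product over the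
vertices of `t` of the offspring probabilities of the child type vectors (times the probability
of the root type). -/
def IsGWLaw {S : Type*} [MeasurableSpace S] (ν : Measure (MTree S))
    (p : S → Measure (List S)) : Prop :=
  (∀ s, IsProbabilityMeasure (p s)) ∧
  (∀ s : S, ∀ l l' : List S, l.Perm l' → p s {l} = p s {l'}) ∧
  ∀ t : MTree S, t.IsPlaneTree →
    ν {T | T.verts = t.verts ∧ ∀ v ∈ t.verts, T.type v = t.type v}
      = ν {T | T.type [] = t.type []} * ∏ v ∈ t.verts, p (t.type v) {ctypeList t v}

/-- A tree is normalized if its type and displacement functions take default values off the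
vertex set, and (for unlabeled trees) all displacements vanish. -/
def Normalized {S : Type*} (s₀ : S) (T : MTree S) : Prop :=
  (∀ v ∉ T.verts, T.type v = s₀) ∧ T.disp = fun _ => 0

/-! ### Displacement families: symmetrization and centering -/

/-- The symmetrized displacement family `π^{sym}` defined by
`π^{u,sym}_s(B) = (1/k!) ∑_{σ ∈ 𝔖_k} π^u_{σ(s)}(σ(B))`. -/
def symFamily {S : Type*} (π : DispFamily S) : DispFamily S := fun r k s =>
  ((Nat.factorial k : ℝ≥0∞))⁻¹ •
    ∑ σ : Equiv.Perm (Fin k),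
      (π r k fun j => s (σ.symm j)).map fun x : Fin k → ℝ => fun j => x (σ j)

/-- A displacement family is locally centered if every coordinate of every displacement
distribution has mean zero. -/
def LocallyCentered {S : Type*} (π : DispFamily S) : Prop :=
  ∀ (r : S) (k : ℕ) (s : Fin k → S) (i : Fin k), (∫ x, x i ∂(π r k s)) = 0

/-- A displacement family is centered if, for every `k`, every parent type `r` and every vector
`z` of type counts summing to `k`, the sum over all ordered child type sequences with counts `z`
of the total mean displacement is zero. -/
def Centered {S : Type*} (π : DispFamily S) : Prop :=
  ∀ (k : ℕ) (r : S) (z : S →₀ ℕ), (z.sum fun _ n => n) = k →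
    (∑ᶠ s ∈ {s : Fin k → S | ∀ x : S,
        ((Finset.univ.filter fun i => s i = x).card = z x)},
      ∑ i : Fin k, ∫ x, x i ∂(π r k s)) = 0

/-! ### Subtrees spanned by finitely many vertices -/

/-- The vertex set of the subtree spanned by the vertices `r i` and their ancestors. -/
def spanVerts {k : ℕ} (r : Fin k → Vertex) : Finset Vertex :=
  insert ([] : Vertex) (Finset.univ.biUnion fun i => ((r i).inits).toFinset)

/-- The rank of the child index `i` of `p` among the child indices present in `s`. -/
def childRank (s : Finset Vertex) (p : Vertex) (i : ℕ+) : ℕ+ :=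
  ((s.filter fun w => ∃ j : ℕ+, j ≤ i ∧ w = p ++ [j]).card).toPNat'

def reindexAux (s : Finset Vertex) : Vertex → Vertex → Vertex
  | _, [] => []
  | p, i :: rest => childRank s p i :: reindexAux s (p ++ [i]) rest

/-- The Ulam–Harris label, in the plane tree with vertex set `s`, of the node corresponding to
the vertex `v ∈ s`: children are relabeled consecutively, preserving their order. -/
def reindex (s : Finset Vertex) (v : Vertex) : Vertex := reindexAux s [] v

/-- The set of child indices of `p` present in `s`. -/
def childIdxs (s : Finset Vertex) (p : Vertex) : Finset ℕ+ :=
  (s.filter fun w => ∃ i : ℕ+, w = p ++ [i]).image fun w => w.getLastD 1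

/-- The `m`-th smallest child index of `p` present in `s`. -/
def nthChildIndex (s : Finset Vertex) (p : Vertex) (m : ℕ+) : ℕ+ :=
  ((childIdxs s p).sort (· ≤ ·)).getD ((m : ℕ) - 1) 1

def unIndexAux (s : Finset Vertex) : Vertex → Vertex → Vertex
  | _, [] => []
  | p, m :: rest =>
      nthChildIndex s p m :: unIndexAux s (p ++ [nthChildIndex s p m]) rest

/-- The inverse of `reindex s`. -/
def unIndex (s : Finset Vertex) (w : Vertex) : Vertex := unIndexAux s [] w

/-- The labeled subtree of `T` with vertex set `s ⊆ T.verts`, viewed as a plane tree (with the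
plane structure, the types and the displacements inherited from `T`). -/
def spanTree {S : Type*} (T : MTree S) (s : Finset Vertex) : MTree S :=
  ⟨s.image (reindex s), fun w => T.type (unIndex s w), fun w => T.disp (unIndex s w)⟩

/-- The labeled subtree of `T` with vertex set `s`, with the displacements on child edges of
branchpoints replaced by `0` (the modified labeling `d⟨·⟩`). -/
def spanTreeMod {S : Type*} (T : MTree S) (s : Finset Vertex) : MTree S :=
  ⟨(spanTree T s).verts, (spanTree T s).type,
    fun w => if nChild (spanTree T s).verts w.dropLast = 1 then (spanTree T s).disp w else 0⟩

/-- `R` is a uniform sample of `k` vertices from the random labeled tree `X`: conditionally on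
`X`, the coordinates of `R` are independent and uniformly distributed on the vertex set of `X`. -/
def UniformSample {Ω : Type*} [MeasurableSpace Ω] (P : Measure Ω) {S : Type*} [MeasurableSpace S]
    (X : Ω → MTree S) {k : ℕ} (R : Ω → Fin k → Vertex) : Prop :=
  ∀ A : Set (MTree S), MeasurableSet A → ∀ r : Fin k → Vertex,
    P {ω | X ω ∈ A ∧ R ω = r}
      = ∫⁻ ω in {ω | X ω ∈ A},
          (if ∀ i, r i ∈ (X ω).verts then (((X ω).verts.card : ℝ≥0∞) ^ k)⁻¹ else 0) ∂P

/-! ### Lexicographic enumeration, height process -/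

/-- The vertices of `t` in lexicographic order. -/
def lexEnum (t : Finset Vertex) : List Vertex := t.sort (· ≤ ·)

/-- The `i`-th vertex in lexicographic order (`v_{|t|} = v_0` by convention, since `v_0` is the
root `[]`, which is also the default value). -/
def lexVertex (t : Finset Vertex) (i : ℕ) : Vertex := (lexEnum t).getD i []

/-- The height process `H_t`, as a function on `ℝ`. -/
def heightFun {S : Type*} (T : MTree S) (s : ℝ) : ℝ :=
  interpFun T.verts.card (fun i => ((lexVertex T.verts i).length : ℝ)) s

/-- The lexicographic label process `S_t`, as a function on `ℝ`. -/
def lexLabelFun {S : Type*} (T : MTree S) (s : ℝ) : ℝ :=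
  interpFun T.verts.card (fun i => labelOf T (lexVertex T.verts i)) s

/-- The height process `H_t`, as a continuous map on `[0,1]`. -/
def heightProcess {S : Type*} (T : MTree S) : C(unitInterval, ℝ) :=
  interpMap T.verts.card fun i => ((lexVertex T.verts i).length : ℝ)

/-- The lexicographic label process `S_t`, as a continuous map on `[0,1]`. -/
def lexLabelProcess {S : Type*} (T : MTree S) : C(unitInterval, ℝ) :=
  interpMap T.verts.card fun i => labelOf T (lexVertex T.verts i)

/-- `j_t(i) = 2i - h(v_i)` for `i < |t|`, and `j_t(i) = 2|t| - 2` otherwise. -/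
def jIdx (t : Finset Vertex) (i : ℕ) : ℕ :=
  if i < t.card then 2 * i - (lexVertex t i).length else 2 * t.card - 2

/-- `φ_t(s) = |t|⁻¹ · sup {i ≤ |t| : j_t(i) ≤ s(2|t|-2)}`. -/
def phi (t : Finset Vertex) (s : ℝ) : ℝ :=
  ((sSup {i : ℕ | i ≤ t.card ∧ (jIdx t i : ℝ) ≤ s * (2 * t.card - 2)} : ℕ) : ℝ) / t.card

/-- The increasing reordering of the finite vector `f`. -/
def sortFun {k : ℕ} (f : Fin k → ℝ) (i : ℕ) : ℝ :=
  ((List.ofFn f).insertionSort (· ≤ ·)).getD i 0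

instance : MeasurableSpace C(unitInterval, ℝ) := borel _

/-!
If the labels of two contour vertices `θ i`, `θ j` differ by more than `M` while
`dist (θ i) (θ j) ≤ K`, the tree lies in `labelGapSet K M`. This set is invariant under every
reordering `permApply σ`, because `permWord σ` preserves tree distances and `permApply σ`
transports labels along it. So the symmetrization kernel gives it mass one at each of its points,
and its probability can only grow under symmetrization.
-/

theorem _root_.MeasureTheory.Measure.aemeasurable_of_bind_ne_zero {α β : Type*}
    [MeasurableSpace α] [MeasurableSpace β] {m : Measure α} {f : α → Measure β} (h : m.bind f ≠ 0) :
    AEMeasurable f m := by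
  by_contra hf
  exact h (by rw [Measure.bind, Measure.map_of_not_aemeasurable hf, Measure.join_zero])

theorem _root_.MeasureTheory.Measure.le_bind_apply {α β : Type*} [MeasurableSpace α]
    [MeasurableSpace β] {m : Measure α} {f : α → Measure β} {s : Set α} {t : Set β}
    (hs : MeasurableSet s) (ht : MeasurableSet t) (hf : AEMeasurable f m)
    (hst : ∀ a ∈ s, 1 ≤ f a t) : m s ≤ m.bind f t := by
  rw [Measure.bind_apply ht hf, ← lintegral_indicator_one hs]
  refine lintegral_mono fun a => ?_
  by_cases ha : a ∈ s
  · simpa [Set.indicator_of_mem ha] using hst a ha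
  · simp [Set.indicator_of_notMem ha]

section Relabeling

variable {S : Type*}

lemma length_permWordAux (σ : PermVec) :
    ∀ v p : Vertex, (permWordAux σ p v).length = v.length
  | [], _ => rfl
  | i :: rest, p => by simp [permWordAux, length_permWordAux σ rest (p ++ [i])]

lemma lcpLen_permWordAux (σ : PermVec) :
    ∀ u v p : Vertex, lcpLen (permWordAux σ p u) (permWordAux σ p v) = lcpLen u v
  | [], v, p => by cases v <;> simp [permWordAux, lcpLen]
  | a :: u, [], p => by simp [permWordAux, lcpLen]
  | a :: u, b :: v, p => by
      by_cases h : a = b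
      · subst h
        simp [permWordAux, lcpLen, lcpLen_permWordAux σ u v (p ++ [a])]
      · simp [permWordAux, lcpLen, h, (σ p).injective.ne h]

lemma treeDist_permWord (σ : PermVec) (u v : Vertex) :
    treeDist (permWord σ u) (permWord σ v) = treeDist u v := by
  simp only [treeDist, permWord, length_permWordAux, lcpLen_permWordAux]

lemma take_permWordAux (σ : PermVec) :
    ∀ (v p : Vertex) (m : ℕ), (permWordAux σ p v).take m = permWordAux σ p (v.take m)
  | [], p, m => by simp [permWordAux]
  | i :: rest, p, 0 => by simp [permWordAux]
  | i :: rest, p, m + 1 => by simp [permWordAux, take_permWordAux σ rest (p ++ [i]) m]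

lemma invWordAux_permWordAux (σ : PermVec) :
    ∀ v p : Vertex, invWordAux σ p (permWordAux σ p v) = v
  | [], p => rfl
  | i :: rest, p => by
      simp [permWordAux, invWordAux, invWordAux_permWordAux σ rest (p ++ [i])]

lemma invWord_permWord (σ : PermVec) (v : Vertex) : invWord σ (permWord σ v) = v :=
  invWordAux_permWordAux σ v []

lemma labelOf_permApply (σ : PermVec) (T : MTree S) (v : Vertex) :
    labelOf (permApply σ T) (permWord σ v) = labelOf T v := by
  simp only [labelOf, permApply, permWord, length_permWordAux, take_permWordAux]
  exact Finset.sum_congr rfl fun j _ => by rw [← permWord, invWord_permWord]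

end Relabeling

section Symmetrization

variable {S : Type*}

def labelGapSet (K M : ℝ) : Set (MTree S) :=
  {T | ∃ v ∈ T.verts, ∃ w ∈ T.verts, (treeDist v w : ℝ) ≤ K ∧ M < |labelOf T v - labelOf T w|}

lemma permApply_mem_labelGapSet {K M : ℝ} {T : MTree S} (σ : PermVec)
    (hT : T ∈ labelGapSet K M) : permApply σ T ∈ labelGapSet K M := by
  obtain ⟨v, hv, w, hw, hdist, hgap⟩ := hT
  refine ⟨permWord σ v, Finset.mem_image_of_mem _ hv, permWord σ w,
    Finset.mem_image_of_mem _ hw, ?_, ?_⟩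
  · rwa [treeDist_permWord]
  · rwa [labelOf_permApply, labelOf_permApply]

lemma theta_mem {t : Finset Vertex} (ht : IsPlaneTreeSet t) (i : ℕ) : theta t i ∈ t := by
  induction i with
  | zero => exact ht.1
  | succ n ih =>
      simp only [theta, contourHist]
      split_ifs with hchild
      · exact (Nat.sInf_mem hchild).1
      · exact ht.2.1 _ ih _ (List.dropLast_prefix _)

lemma lt_treeDist_theta_or_mem_labelGapSet {K M : ℝ} {T : MTree S} (hT : T.IsPlaneTree)
    {i j : ℕ} (hgap : M < |labelOf T (theta T.verts i) - labelOf T (theta T.verts j)|) :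
    K < (treeDist (theta T.verts i) (theta T.verts j) : ℝ) ∨ T ∈ labelGapSet K M :=
  (lt_or_ge _ _).imp_right fun hdist =>
    ⟨_, theta_mem hT i, _, theta_mem hT j, hdist, hgap⟩

lemma PermSet.apply_eq_self {T : MTree S} {σ : PermVec} (hσ : σ ∈ PermSet T) {v : Vertex}
    {i : ℕ+} (hi : nChild T.verts v < i) : σ v i = i := by
  by_cases hv : v ∈ T.verts
  · exact (hσ.1 v hv).2 i hi
  · rw [hσ.2 v hv, Equiv.Perm.one_apply]

lemma PermSet.ext {T : MTree S} {σ τ : PermVec} (hσ : σ ∈ PermSet T) (hτ : τ ∈ PermSet T)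
    (h : ∀ v ∈ T.verts, ∀ i : ℕ+, (i : ℕ) ≤ nChild T.verts v → σ v i = τ v i) : σ = τ := by
  funext v
  ext i : 1
  by_cases hv : v ∈ T.verts
  · by_cases hi : (i : ℕ) ≤ nChild T.verts v
    · exact h v hv i hi
    · rw [PermSet.apply_eq_self hσ (not_le.1 hi), PermSet.apply_eq_self hτ (not_le.1 hi)]
  · rw [hσ.2 v hv, hτ.2 v hv]

lemma PermSet.finite (T : MTree S) : (PermSet T).Finite := by
  rw [← Set.finite_coe_iff]
  -- `σ` is determined by the values `σ v i ∈ {1, …, nChild v}` for `v ∈ T` and `i ≤ nChild v`.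
  let code (σ : PermSet T) (v : T.verts) (m : Fin (nChild T.verts v)) :
      Fin (nChild T.verts v + 1) :=
    ⟨σ.1 v m.val.succPNat, Nat.lt_succ_of_le ((σ.2.1 v v.2).1 _ m.2)⟩
  refine Finite.of_injective code fun σ τ hcode => Subtype.ext ?_
  refine PermSet.ext σ.2 τ.2 fun v hv i hi => PNat.coe_injective ?_
  have hpred : i.natPred < nChild T.verts v := by
    have := i.pos
    rw [PNat.natPred]
    omega
  have := congrArg Fin.val (congrFun (congrFun hcode ⟨v, hv⟩) ⟨i.natPred, hpred⟩)
  simpa [code, PNat.succPNat_natPred] using this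

lemma one_mem_permSet (T : MTree S) : (1 : PermVec) ∈ PermSet T :=
  ⟨fun _ _ => ⟨fun _ hi => hi, fun _ _ => rfl⟩, fun _ _ => rfl⟩

lemma symKernel_apply_eq_one [MeasurableSpace S] {T : MTree S} {E : Set (MTree S)}
    (hE : MeasurableSet E) (hT : ∀ σ ∈ PermSet T, permApply σ T ∈ E) : symKernel T E = 1 := by
  have hfin := PermSet.finite T
  have hcard : ((PermSet T).ncard : ℝ≥0∞) ≠ 0 :=
    Nat.cast_ne_zero.2 ((Set.ncard_pos hfin).2 ⟨1, one_mem_permSet T⟩).ne'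
  have hdirac : ∀ σ : PermSet T, Measure.dirac (permApply σ.1 T) E = 1 := fun σ => by
    simp [Measure.dirac_apply' _ hE, hT σ σ.2]
  rw [symKernel, Measure.smul_apply, Measure.sum_apply _ hE, tsum_congr hdirac,
    ENNReal.tsum_set_one, ← hfin.cast_ncard_eq, ENat.toENNReal_coe, smul_eq_mul]
  exact ENNReal.inv_mul_cancel hcard (ENNReal.natCast_ne_top _)

lemma le_symLaw_apply [MeasurableSpace S] {ν : Measure (MTree S)} (hν : symLaw ν ≠ 0)
    {E : Set (MTree S)} (hE : MeasurableSet E)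
    (hinv : ∀ T ∈ E, ∀ σ ∈ PermSet T, permApply σ T ∈ E) : ν E ≤ symLaw ν E :=
  Measure.le_bind_apply hE hE (Measure.aemeasurable_of_bind_ne_zero hν)
    fun T hT => (symKernel_apply_eq_one hE (hinv T hT)).ge

section Measurability

variable [MeasurableSpace S]

lemma measurable_verts : Measurable (MTree.verts : MTree S → Finset Vertex) :=
  measurable_fst.comp (comap_measurable _)

lemma measurable_disp : Measurable (MTree.disp : MTree S → Vertex → ℝ) :=
  measurable_snd.comp (measurable_snd.comp (comap_measurable _))

lemma measurable_labelOf (v : Vertex) : Measurable fun T : MTree S => labelOf T v :=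
  Finset.measurable_sum _ fun j _ => (measurable_pi_apply (v.take (j + 1))).comp measurable_disp

lemma measurableSet_labelGapSet (K M : ℝ) : MeasurableSet (labelGapSet (S := S) K M) := by
  have hmem (v : Vertex) : MeasurableSet {T : MTree S | v ∈ T.verts} :=
    measurable_verts (MeasurableSpace.measurableSet_top (s := {s | v ∈ s}))
  have hunion : labelGapSet (S := S) K M = ⋃ v, ⋃ w,
      {T | v ∈ T.verts} ∩ {T | w ∈ T.verts} ∩ {_T | (treeDist v w : ℝ) ≤ K}
        ∩ {T | M < |labelOf T v - labelOf T w|} := by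
    ext T
    simp only [labelGapSet, Set.mem_ofPred_eq, Set.mem_iUnion, Set.mem_inter_iff]
    tauto
  rw [hunion]
  refine .iUnion fun v => .iUnion fun w => (((hmem v).inter (hmem w)).inter (.const _)).inter ?_
  exact measurableSet_lt measurable_const ((measurable_labelOf v).sub (measurable_labelOf w)).abs

lemma measurableSet_not_isPlaneTree : MeasurableSet {T : MTree S | ¬ T.IsPlaneTree} :=
  measurable_verts (MeasurableSpace.measurableSet_top (s := {s | ¬ IsPlaneTreeSet s}))

end Measurability

end Symmetrization

theorem statement6_general {S : Type*} [MeasurableSpace S]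
    {Ω : Type*} [MeasurableSpace Ω] (P : Measure Ω)
    (X : Ω → MTree S) (hX : Measurable X)
    (hplane : (P.map X) {T | ¬ T.IsPlaneTree} = 0)
    {Ω' : Type*} [MeasurableSpace Ω'] (P' : Measure Ω') (hP' : IsProbabilityMeasure P')
    (Xs : Ω' → MTree S) (hXs : Measurable Xs) (hsym : P'.map Xs = symLaw (P.map X))
    (k : ℕ) (K M : ℝ) :
    P {ω | ∃ i j : ℕ, i ≤ 2 * (X ω).verts.card - 2 ∧ j ≤ 2 * (X ω).verts.card - 2 ∧
        i ≤ j + k ∧ j ≤ i + k ∧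
        M < |labelOf (X ω) (theta (X ω).verts i) - labelOf (X ω) (theta (X ω).verts j)|}
      ≤ P {ω | ∃ i j : ℕ, i ≤ 2 * (X ω).verts.card - 2 ∧ j ≤ 2 * (X ω).verts.card - 2 ∧
            i ≤ j + k ∧ j ≤ i + k ∧
            K < (treeDist (theta (X ω).verts i) (theta (X ω).verts j) : ℝ)}
        + P' {ω | ∃ v ∈ (Xs ω).verts, ∃ w ∈ (Xs ω).verts,
            (treeDist v w : ℝ) ≤ K ∧ M < |labelOf (Xs ω) v - labelOf (Xs ω) w|} := by
  have hE : MeasurableSet (labelGapSet (S := S) K M) := measurableSet_labelGapSet K M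
  have hplanar : ∀ᵐ ω ∂P, (X ω).IsPlaneTree := by
    rw [Measure.map_apply hX measurableSet_not_isPlaneTree] at hplane
    exact ae_iff.2 hplane
  have hsym_ne : symLaw (P.map X) ≠ 0 := by
    rw [← hsym]
    exact (Measure.isProbabilityMeasure_map hXs.aemeasurable).ne_zero
  refine (measure_mono_ae ?_).trans
    ((measure_union_le _ (X ⁻¹' labelGapSet K M)).trans (add_le_add le_rfl ?_))
  · filter_upwards [hplanar] with ω hω ⟨i, j, hi, hj, hij, hji, hgap⟩
    exact (lt_treeDist_theta_or_mem_labelGapSet hω hgap).imp_left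
      fun hdist => ⟨i, j, hi, hj, hij, hji, hdist⟩
  · calc P (X ⁻¹' labelGapSet K M)
        = P.map X (labelGapSet K M) := (Measure.map_apply hX hE).symm
      _ ≤ symLaw (P.map X) (labelGapSet K M) :=
        le_symLaw_apply hsym_ne hE fun T hT σ _ => permApply_mem_labelGapSet σ hT
      _ = _ := by rw [← hsym, Measure.map_apply hXs hE]; rfl

/-- Lemma 3.2. Let `(T,D)` be a random labeled plane tree and `(T^sym,D^sym)`
its symmetrization. For any constants `k, K, M`:
`P(sup_{|i-j| ≤ k} |ℓ(θ_T(i)) - ℓ(θ_T(j))| > M)` is at most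
`P(sup_{|i-j| ≤ k} dist(θ_T(i),θ_T(j)) > K) + P(sup_{dist(v,w) ≤ K} |ℓ^sym(v) - ℓ^sym(w)| > M)`. -/
theorem statement6 {S : Type*} [Countable S] [MeasurableSpace S]
    {Ω : Type*} [MeasurableSpace Ω] (P : Measure Ω) (hP : IsProbabilityMeasure P)
    (X : Ω → MTree S) (hX : Measurable X)
    (hplane : (P.map X) {T | ¬ T.IsPlaneTree} = 0)
    {Ω' : Type*} [MeasurableSpace Ω'] (P' : Measure Ω') (hP' : IsProbabilityMeasure P')
    (Xs : Ω' → MTree S) (hXs : Measurable Xs) (hsym : P'.map Xs = symLaw (P.map X))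
    (k : ℕ) (K M : ℝ) :
    P {ω | ∃ i j : ℕ, i ≤ 2 * (X ω).verts.card - 2 ∧ j ≤ 2 * (X ω).verts.card - 2 ∧
        i ≤ j + k ∧ j ≤ i + k ∧
        M < |labelOf (X ω) (theta (X ω).verts i) - labelOf (X ω) (theta (X ω).verts j)|}
      ≤ P {ω | ∃ i j : ℕ, i ≤ 2 * (X ω).verts.card - 2 ∧ j ≤ 2 * (X ω).verts.card - 2 ∧
            i ≤ j + k ∧ j ≤ i + k ∧
            K < (treeDist (theta (X ω).verts i) (theta (X ω).verts j) : ℝ)}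
        + P' {ω | ∃ v ∈ (Xs ω).verts, ∃ w ∈ (Xs ω).verts,
            (treeDist v w : ℝ) ≤ K ∧ M < |labelOf (Xs ω) v - labelOf (Xs ω) w|} :=
  statement6_general P X hX hplane P' hP' Xs hXs hsym k K M

end TreeSym
end
end

section
/- Assume the hypotheses of the symmetrization theorem. Then for all β > 0 there exists α = α(β) > 0 such that limsup_n P( sup over 0 ≤ i, j ≤ 2|T_n|−2 with |i−j| ≤ ⌊α·|T_n|⌋ of a_n·dist(θ_{T_n}(i), θ_{T_n}(j)) > β ) < β. -/
open MeasureTheory Filter Topology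
open scoped ENNReal NNReal Classical

noncomputable section

namespace TreeSym

/-!
The event only concerns the vertex set of `T_n`. The typed tree underlying a valid law has a
symmetric law and symmetrization only relabels children, so the vertex sets of `T_n` and
`T_n^sym` have the same law and the event has the same probability for both trees.

If `i ≤ j` and `m` is the minimal height of the contour on `[i, j]`, the ancestor at height `m`
of `θ(i)` stays an ancestor of the explored vertex up to time `j`, so
`dist(θ(i), θ(j)) ≤ (C(i) - m) + (C(j) - m)`. Hence, on the event, the modulus of continuity at
scale `α` of `a_n C_{T_n^sym}` exceeds `β / 2`. Testing the convergence in distribution against a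
continuous cutoff of this modulus bounds the limsup by the corresponding expectation for the
limit `C`, which is below `β` once `α` is small, by uniform continuity of `C` and dominated
convergence.
-/

lemma theta_succ_eq_append_or_dropLast (t : Finset Vertex) (n : ℕ) :
    (∃ c : ℕ+, theta t (n + 1) = theta t n ++ [c]) ∨ theta t (n + 1) = (theta t n).dropLast := by
  simp only [theta, contourHist]
  split_ifs
  · exact Or.inl ⟨_, rfl⟩
  · exact Or.inr rfl

lemma lcpLen_comm (u v : Vertex) : lcpLen u v = lcpLen v u := by
  induction u generalizing v with
  | nil => cases v <;> rfl
  | cons a u ih =>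
    cases v with
    | nil => rfl
    | cons b v => simp only [lcpLen, ih, eq_comm]

lemma lcpLen_self (v : Vertex) : lcpLen v v = v.length := by
  induction v with
  | nil => rfl
  | cons a u ih => simp [lcpLen, ih]

lemma treeDist_self (v : Vertex) : treeDist v v = 0 := by
  simp only [treeDist, lcpLen_self]
  omega

lemma treeDist_comm (u v : Vertex) : treeDist u v = treeDist v u := by
  rw [treeDist, treeDist, lcpLen_comm, Nat.add_comm]

lemma length_le_lcpLen {w u v : Vertex} (hu : w <+: u) (hv : w <+: v) :
    w.length ≤ lcpLen u v := by
  induction w generalizing u v with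
  | nil => simp
  | cons x w ih =>
    obtain ⟨r, rfl⟩ := hu
    obtain ⟨s, rfl⟩ := hv
    simpa [lcpLen] using ih (List.prefix_append w r) (List.prefix_append w s)

lemma take_prefix_theta {t : Finset Vertex} {m i j : ℕ} (hij : i ≤ j)
    (hm : ∀ k ∈ Finset.Icc i j, m ≤ (theta t k).length) :
    (theta t i).take m <+: theta t j := by
  induction j, hij using Nat.le_induction with
  | base => exact List.take_prefix _ _
  | succ j hij ih =>
    have hpre := ih fun k hk => hm k (by simp only [Finset.mem_Icc] at hk ⊢; omega)
    rcases theta_succ_eq_append_or_dropLast t j with ⟨c, hc⟩ | hc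
    · exact hc ▸ hpre.trans (List.prefix_append _ _)
    · rw [hc]
      refine List.prefix_of_prefix_length_le hpre (List.dropLast_prefix _) ?_
      rw [← hc, List.length_take]
      exact (min_le_left _ _).trans (hm (j + 1) (by simp only [Finset.mem_Icc]; omega))

lemma treeDist_theta_add_le {t : Finset Vertex} {m i j : ℕ} (hij : i ≤ j)
    (hm : ∀ k ∈ Finset.Icc i j, m ≤ (theta t k).length) :
    treeDist (theta t i) (theta t j) + 2 * m ≤ (theta t i).length + (theta t j).length := by
  have hmi : m ≤ (theta t i).length := hm i (by simp [hij])
  have hlcp : m ≤ lcpLen (theta t i) (theta t j) := by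
    simpa [List.length_take, hmi] using
      length_le_lcpLen (List.take_prefix m (theta t i)) (take_prefix_theta hij hm)
  have hmj : m ≤ (theta t j).length := hm j (by simp [hij])
  unfold treeDist
  omega

lemma interpFun_natCast_div {n i : ℕ} (f : ℕ → ℝ) (hi : i ≤ n) :
    interpFun n f (i / n) = f i := by
  rcases Nat.eq_zero_or_pos n with rfl | hn
  · simp [interpFun, Nat.le_zero.mp hi]
  have hterm : ∀ k ∈ Finset.range n, (f (k + 1) - f k) * max 0 (min 1 ((i : ℝ) / n * n - k))
      = if k < i then f (k + 1) - f k else 0 := by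
    intro k _
    rw [div_mul_cancel₀ _ (by positivity)]
    split_ifs with hk
    · have : (k : ℝ) + 1 ≤ i := by exact_mod_cast hk
      rw [min_eq_left (by linarith), max_eq_right zero_le_one, mul_one]
    · have : (i : ℝ) ≤ k := by exact_mod_cast Nat.le_of_not_lt hk
      rw [min_eq_right (by linarith), max_eq_left (by linarith), mul_zero]
  rw [interpFun, Finset.sum_congr rfl hterm, ← Finset.sum_filter,
    show (Finset.range n).filter (· < i) = Finset.range i by
      ext; simp only [Finset.mem_filter, Finset.mem_range]; omega,
    Finset.sum_range_sub]
  ring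

lemma interpMap_natCast_div {n i : ℕ} (f : ℕ → ℝ) (hi : i ≤ n) (h : (i / n : ℝ) ∈ unitInterval) :
    interpMap n f ⟨i / n, h⟩ = f i :=
  interpFun_natCast_div f hi

def modulus (δ : ℝ) (x : C(unitInterval, ℝ)) : ℝ :=
  sSup ((fun p : unitInterval × unitInterval => |x p.1 - x p.2|) ''
    {p | |(p.1 : ℝ) - p.2| ≤ δ})

lemma bddAbove_modulus_set (δ : ℝ) (x : C(unitInterval, ℝ)) :
    BddAbove ((fun p : unitInterval × unitInterval => |x p.1 - x p.2|) ''
      {p | |(p.1 : ℝ) - p.2| ≤ δ}) := by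
  refine ⟨2 * ‖x‖, ?_⟩
  rintro _ ⟨p, -, rfl⟩
  have h₁ := x.norm_coe_le_norm p.1
  have h₂ := x.norm_coe_le_norm p.2
  rw [Real.norm_eq_abs] at h₁ h₂
  linarith [abs_sub (x p.1) (x p.2)]

lemma le_modulus {δ : ℝ} (x : C(unitInterval, ℝ)) {s t : unitInterval}
    (h : |(s : ℝ) - t| ≤ δ) : |x s - x t| ≤ modulus δ x :=
  le_csSup (bddAbove_modulus_set δ x) ⟨(s, t), h, rfl⟩

lemma modulus_nonneg (δ : ℝ) (x : C(unitInterval, ℝ)) : 0 ≤ modulus δ x :=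
  Real.sSup_nonneg <| by rintro _ ⟨p, -, rfl⟩; exact abs_nonneg _

lemma modulus_le {δ c : ℝ} {x : C(unitInterval, ℝ)} (hc : 0 ≤ c)
    (h : ∀ s t : unitInterval, |(s : ℝ) - t| ≤ δ → |x s - x t| ≤ c) : modulus δ x ≤ c :=
  Real.sSup_le (by rintro _ ⟨p, hp, rfl⟩; exact h p.1 p.2 hp) hc

lemma lipschitzWith_modulus (δ : ℝ) : LipschitzWith 2 (modulus δ) := by
  refine LipschitzWith.of_le_add_mul 2 fun x y => ?_
  refine Real.sSup_le ?_ (by positivity [modulus_nonneg δ y])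
  rintro _ ⟨p, hp, rfl⟩
  have h₁ : dist (x p.1) (y p.1) ≤ dist x y := ContinuousMap.dist_apply_le_dist _
  have h₂ : dist (x p.2) (y p.2) ≤ dist x y := ContinuousMap.dist_apply_le_dist _
  rw [Real.dist_eq] at h₁ h₂
  have := le_modulus y hp
  push_cast
  linarith [abs_sub_le (x p.1) (y p.1) (x p.2), abs_sub_le (y p.1) (y p.2) (x p.2),
    abs_sub_comm (y p.2) (x p.2)]

lemma eventually_modulus_one_div_le (x : C(unitInterval, ℝ)) {ε : ℝ} (hε : 0 < ε) :
    ∀ᶠ k : ℕ in atTop, modulus (1 / (k + 1)) x ≤ ε := by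
  obtain ⟨δ, hδ, hx⟩ := Metric.uniformContinuous_iff.mp
    (CompactSpace.uniformContinuous_of_continuous x.continuous) ε hε
  obtain ⟨K, hK⟩ := exists_nat_one_div_lt hδ
  filter_upwards [eventually_ge_atTop K] with k hk
  refine modulus_le hε.le fun s t hst => (hx ?_).le
  rw [Subtype.dist_eq, Real.dist_eq]
  calc |(s : ℝ) - t| ≤ 1 / (k + 1) := hst
    _ ≤ 1 / (K + 1) := by gcongr
    _ < δ := hK

def cutoff (β r : ℝ) : ℝ := min 1 (max 0 (4 / β * (r - β / 4)))

lemma continuous_cutoff (β : ℝ) : Continuous (cutoff β) := by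
  unfold cutoff
  fun_prop

lemma cutoff_nonneg (β r : ℝ) : 0 ≤ cutoff β r :=
  le_min zero_le_one (le_max_left _ _)

lemma abs_cutoff_le_one (β r : ℝ) : |cutoff β r| ≤ 1 := by
  rw [abs_of_nonneg (cutoff_nonneg β r)]
  exact min_le_left _ _

lemma cutoff_eq_one {β r : ℝ} (hβ : 0 < β) (hr : β / 2 ≤ r) : cutoff β r = 1 := by
  have : 1 ≤ 4 / β * (r - β / 4) := by
    rw [div_mul_eq_mul_div, le_div_iff₀ hβ]
    linarith
  rw [cutoff, max_eq_right (zero_le_one.trans this), min_eq_left this]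

lemma cutoff_eq_zero {β r : ℝ} (hβ : 0 < β) (hr : r ≤ β / 4) : cutoff β r = 0 := by
  have : 4 / β * (r - β / 4) ≤ 0 := mul_nonpos_of_nonneg_of_nonpos (by positivity) (by linarith)
  rw [cutoff, max_eq_left this, min_eq_right zero_le_one]

def modulusTest (β α : ℝ) :
    BoundedContinuousFunction (C(unitInterval, ℝ) × C(unitInterval, ℝ)) ℝ :=
  .ofNormedAddCommGroup (fun x => cutoff β (modulus α x.1))
    ((continuous_cutoff β).comp ((lipschitzWith_modulus α).continuous.comp continuous_fst)) 1
    fun _ => (Real.norm_eq_abs _).trans_le (abs_cutoff_le_one _ _)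

lemma exists_integral_modulusTest_lt {Ω₀ : Type*} [MeasurableSpace Ω₀] (P₀ : Measure Ω₀)
    [IsFiniteMeasure P₀] (Y : Ω₀ → C(unitInterval, ℝ) × C(unitInterval, ℝ)) {β : ℝ}
    (hβ : 0 < β) : ∃ α, 0 < α ∧ ∫ ω, modulusTest β α (Y ω) ∂P₀ < β := by
  by_cases hmeas : ∀ k : ℕ, AEStronglyMeasurable (fun ω => modulusTest β (1 / (k + 1)) (Y ω)) P₀
  · have hlim : Tendsto (fun k : ℕ => ∫ ω, modulusTest β (1 / (k + 1)) (Y ω) ∂P₀) atTop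
        (𝓝 (∫ _, (0 : ℝ) ∂P₀)) := by
      refine tendsto_integral_of_dominated_convergence (fun _ => 1) hmeas (integrable_const 1)
        (fun k => .of_forall fun ω => (Real.norm_eq_abs _).trans_le (abs_cutoff_le_one _ _))
        (.of_forall fun ω => tendsto_const_nhds.congr' ?_)
      filter_upwards [eventually_modulus_one_div_le (Y ω).1 (by positivity : 0 < β / 4)]
        with k hk
      exact (cutoff_eq_zero hβ hk).symm
    rw [integral_zero] at hlim
    obtain ⟨k, hk⟩ := (hlim.eventually_lt_const hβ).exists
    exact ⟨_, by positivity, hk⟩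
  · simp only [not_forall] at hmeas
    obtain ⟨k, hk⟩ := hmeas
    -- `Y` need not be measurable; a non-measurable integrand has Bochner integral `0`.
    exact ⟨1 / (k + 1), by positivity, by rwa [integral_undef fun h => hk h.1]⟩

def ContourJump (c α β : ℝ) (t : Finset Vertex) : Prop :=
  ∃ i j : ℕ, i ≤ 2 * t.card - 2 ∧ j ≤ 2 * t.card - 2 ∧
    i ≤ j + ⌊α * (t.card : ℝ)⌋₊ ∧ j ≤ i + ⌊α * (t.card : ℝ)⌋₊ ∧
    β < c * (treeDist (theta t i) (theta t j) : ℝ)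

lemma abs_natCast_div_sub_le {t : Finset Vertex} {α : ℝ} (hα : 0 ≤ α) {k l : ℕ}
    (hN : 0 < 2 * t.card - 2) (hkl : k ≤ l + ⌊α * (t.card : ℝ)⌋₊)
    (hlk : l ≤ k + ⌊α * (t.card : ℝ)⌋₊) :
    |(k : ℝ) / (2 * t.card - 2 : ℕ) - (l : ℝ) / (2 * t.card - 2 : ℕ)| ≤ α := by
  have hNr : (0 : ℝ) < (2 * t.card - 2 : ℕ) := by exact_mod_cast hN
  have hcard : (t.card : ℝ) ≤ (2 * t.card - 2 : ℕ) := by exact_mod_cast (by omega : t.card ≤ _)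
  have hfloor : (⌊α * (t.card : ℝ)⌋₊ : ℝ) ≤ α * t.card := Nat.floor_le (by positivity)
  have hkl' : (k : ℝ) ≤ l + ⌊α * (t.card : ℝ)⌋₊ := by exact_mod_cast hkl
  have hlk' : (l : ℝ) ≤ k + ⌊α * (t.card : ℝ)⌋₊ := by exact_mod_cast hlk
  rw [← sub_div, abs_div, abs_of_pos hNr, div_le_iff₀ hNr]
  calc |(k : ℝ) - l| ≤ α * t.card := abs_sub_le_iff.2 ⟨by linarith, by linarith⟩
    _ ≤ α * (2 * t.card - 2 : ℕ) := by gcongr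

lemma mul_treeDist_le_two_mul_modulus {S : Type*} (T : MTree S) {c α : ℝ} (hc : 0 ≤ c)
    (hα : 0 ≤ α) {i j : ℕ} (hij : i ≤ j) (hj : j ≤ 2 * T.verts.card - 2)
    (hji : j ≤ i + ⌊α * (T.verts.card : ℝ)⌋₊) :
    c * treeDist (theta T.verts i) (theta T.verts j) ≤ 2 * modulus α (c • contourProcess T) := by
  set N := 2 * T.verts.card - 2
  rcases Nat.eq_zero_or_pos N with hN0 | hNpos
  · obtain rfl : j = 0 := by omega
    obtain rfl : i = 0 := by omega
    simp [treeDist_self, modulus_nonneg]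
  obtain ⟨k₀, hk₀, hmin⟩ := (Finset.Icc i j).exists_min_image (fun k => (theta T.verts k).length)
    ⟨i, by simp [hij]⟩
  set m := (theta T.verts k₀).length
  have hgrid (k : ℕ) (hk : k ≤ N) : (k / N : ℝ) ∈ unitInterval :=
    unitInterval.div_mem (by positivity) (by positivity) (by exact_mod_cast hk)
  have hleg : ∀ k ∈ Finset.Icc i j,
      c * ((theta T.verts k).length - m : ℝ) ≤ modulus α (c • contourProcess T) := by
    intro k hk
    rw [Finset.mem_Icc] at hk hk₀
    have hosc := le_modulus (c • contourProcess T) (s := ⟨k / N, hgrid k (by omega)⟩)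
      (t := ⟨k₀ / N, hgrid k₀ (by omega)⟩) (abs_natCast_div_sub_le hα hNpos (by omega) (by omega))
    have hm : (m : ℝ) ≤ (theta T.verts k).length := by exact_mod_cast hmin k (by simp [hk])
    rwa [ContinuousMap.smul_apply, ContinuousMap.smul_apply, contourProcess,
      interpMap_natCast_div _ (by omega), interpMap_natCast_div _ (by omega), smul_eq_mul,
      smul_eq_mul, ← mul_sub, abs_of_nonneg (mul_nonneg hc (by linarith))] at hosc
  have hd : (treeDist (theta T.verts i) (theta T.verts j) : ℝ) + 2 * m
      ≤ (theta T.verts i).length + (theta T.verts j).length := by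
    exact_mod_cast treeDist_theta_add_le hij hmin
  nlinarith [hleg i (by simp [hij]), hleg j (by simp [hij])]

lemma ContourJump.modulusTest_eq_one {S : Type*} {T : MTree S} {c α β : ℝ} (hc : 0 ≤ c)
    (hα : 0 ≤ α) (hβ : 0 < β) (h : ContourJump c α β T.verts) (z : C(unitInterval, ℝ)) :
    modulusTest β α (c • contourProcess T, z) = 1 := by
  obtain ⟨i, j, hi, hj, hij, hji, hβd⟩ := h
  have key : β < 2 * modulus α (c • contourProcess T) := by
    rcases le_total i j with hle | hle
    · exact hβd.trans_le (mul_treeDist_le_two_mul_modulus T hc hα hle hj hji)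
    · rw [treeDist_comm] at hβd
      exact hβd.trans_le (mul_treeDist_le_two_mul_modulus T hc hα hle hi hij)
  exact cutoff_eq_one hβ (by linarith)

lemma finite_setOf_perm_fixing {α : Type*} {s : Set α} (hs : s.Finite) :
    {σ : Equiv.Perm α | ∀ x ∉ s, σ x = x}.Finite := by
  classical
  have := hs.to_subtype
  exact Set.finite_coe_iff.mp (Finite.of_equiv _ (Equiv.Perm.subtypeEquivSubtypePerm (· ∈ s)))

def permSetOf (t : Finset Vertex) : Set PermVec :=
  {σ | (∀ v ∈ t,
          (∀ i : ℕ+, (i : ℕ) ≤ nChild t v → ((σ v i : ℕ) ≤ nChild t v)) ∧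
          (∀ i : ℕ+, nChild t v < (i : ℕ) → σ v i = i)) ∧
        ∀ v ∉ t, σ v = 1}

lemma permSet_eq_permSetOf {S : Type*} (T : MTree S) : PermSet T = permSetOf T.verts := rfl

lemma finite_permSetOf (t : Finset Vertex) : (permSetOf t).Finite := by
  refine .of_finite_image (f := fun σ (v : t) => σ v) ?_ fun σ hσ τ hτ h => funext fun v => ?_
  · refine (Set.Finite.pi fun v : t => finite_setOf_perm_fixing
      ((Set.finite_le_nat (nChild t v)).preimage PNat.coe_injective.injOn)).subset ?_
    rintro _ ⟨σ, hσ, rfl⟩ v - i hi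
    exact (hσ.1 v v.2).2 i (not_le.mp hi)
  · by_cases hv : v ∈ t
    · exact congrFun h ⟨v, hv⟩
    · rw [hσ.2 v hv, hτ.2 v hv]

section Symmetrization

variable {S : Type*} [MeasurableSpace S]

lemma measurable_verts_s7 : Measurable (fun T : MTree S => T.verts) :=
  measurable_fst.comp (comap_measurable _)

lemma measurable_type : Measurable (fun T : MTree S => T.type) :=
  (measurable_fst.comp measurable_snd).comp (comap_measurable _)

lemma measurable_disp_s7 : Measurable (fun T : MTree S => T.disp) :=
  (measurable_snd.comp measurable_snd).comp (comap_measurable _)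

lemma measurable_mtree_mk {α : Type*} [MeasurableSpace α] {g : α → MTree S}
    (h₁ : Measurable fun a => (g a).verts) (h₂ : Measurable fun a => (g a).type)
    (h₃ : Measurable fun a => (g a).disp) : Measurable g :=
  measurable_comap_iff.mpr (h₁.prodMk (h₂.prodMk h₃))

lemma measurable_permApply (σ : PermVec) : Measurable (permApply (S := S) σ) :=
  measurable_mtree_mk
    ((measurable_from_top (f := fun t : Finset Vertex => t.image (permWord σ))).comp
      measurable_verts_s7)
    (measurable_pi_lambda _ fun w => (measurable_pi_apply (invWord σ w)).comp measurable_type)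
    (measurable_pi_lambda _ fun w => (measurable_pi_apply (invWord σ w)).comp measurable_disp_s7)

lemma measurable_shape : Measurable (shape (S := S)) :=
  measurable_mtree_mk measurable_verts_s7 measurable_type measurable_const

lemma symKernel_apply (T : MTree S) {A : Set (MTree S)} (hA : MeasurableSet A) :
    symKernel T A = ((PermSet T).ncard : ℝ≥0∞)⁻¹ *
      ∑' σ : PermSet T, A.indicator 1 (permApply (σ : PermVec) T) := by
  rw [symKernel, Measure.smul_apply, Measure.sum_apply _ hA, smul_eq_mul]
  exact congrArg _ (tsum_congr fun σ => Measure.dirac_apply' _ hA)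

lemma measurable_symKernel_apply {A : Set (MTree S)} (hA : MeasurableSet A) :
    Measurable fun T : MTree S => symKernel T A := by
  have hF : Measurable fun p : MTree S × Finset Vertex =>
      ((permSetOf p.2).ncard : ℝ≥0∞)⁻¹ * ∑' σ : permSetOf p.2, A.indicator 1 (permApply σ p.1) :=
    measurable_from_prod_countable_left fun t => by
      have := (finite_permSetOf t).to_subtype
      have hA' : Measurable (A.indicator (1 : MTree S → ℝ≥0∞)) := measurable_one.indicator hA
      dsimp only
      exact Measurable.const_mul
        (Measurable.tsum fun σ : permSetOf t => hA'.comp (measurable_permApply (σ : PermVec))) _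
  have hsymKernel : (fun T => symKernel T A) = fun T =>
      ((permSetOf T.verts).ncard : ℝ≥0∞)⁻¹ *
        ∑' σ : permSetOf T.verts, A.indicator 1 (permApply σ T) :=
    funext fun T => by rw [symKernel_apply T hA, permSet_eq_permSetOf]
  have hpair : Measurable fun T : MTree S => (T, T.verts) := measurable_id.prodMk measurable_verts_s7
  rw [hsymKernel]
  simpa only [Function.comp_def] using hF.comp hpair

lemma measurable_symKernel : Measurable (symKernel (S := S)) :=
  Measure.measurable_of_measurable_coe _ fun _ hA => measurable_symKernel_apply hA

lemma symLaw_apply (ν : Measure (MTree S)) {A : Set (MTree S)} (hA : MeasurableSet A) :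
    symLaw ν A = ∫⁻ T, symKernel T A ∂ν :=
  Measure.bind_apply hA measurable_symKernel.aemeasurable

lemma symKernel_preimage_shape (T : MTree S) {A : Set (MTree S)} (hA : MeasurableSet A) :
    symKernel T (shape ⁻¹' A) = symKernel (shape T) A := by
  rw [symKernel_apply T (measurable_shape hA), symKernel_apply (shape T) hA]
  rfl

lemma symLaw_map_shape (ν : Measure (MTree S)) :
    (symLaw ν).map shape = symLaw (ν.map shape) := by
  ext A hA
  rw [Measure.map_apply measurable_shape hA, symLaw_apply ν (measurable_shape hA),
    symLaw_apply _ hA, lintegral_map (measurable_symKernel_apply hA) measurable_shape]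
  exact lintegral_congr fun T => symKernel_preimage_shape T hA

lemma symLaw_verts_mem {ν : Measure (MTree S)} (hν : IsSymmetricLaw (ν.map shape))
    (W : Set (Finset Vertex)) :
    symLaw ν {T | T.verts ∈ W} = ν {T | T.verts ∈ W} := by
  have hW : MeasurableSet {T : MTree S | T.verts ∈ W} :=
    measurable_verts_s7 MeasurableSpace.measurableSet_top
  have hpre : shape ⁻¹' {T : MTree S | T.verts ∈ W} = {T | T.verts ∈ W} := rfl
  rw [← hpre, ← Measure.map_apply measurable_shape hW, symLaw_map_shape, hν,
    Measure.map_apply measurable_shape hW]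

end Symmetrization

lemma measure_verts_mem_eq {S : Type*} [MeasurableSpace S] {Ω Ω' : Type*} [MeasurableSpace Ω]
    [MeasurableSpace Ω'] {P : Measure Ω} {P' : Measure Ω'} {X : Ω → MTree S}
    {Xs : Ω' → MTree S} (hX : Measurable X) (hXs : Measurable Xs)
    (hshape : IsSymmetricLaw ((P.map X).map shape)) (hsym : P'.map Xs = symLaw (P.map X))
    (W : Set (Finset Vertex)) :
    P {ω | (X ω).verts ∈ W} = P' {ω | (Xs ω).verts ∈ W} := by
  have hW : MeasurableSet {T : MTree S | T.verts ∈ W} :=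
    measurable_verts_s7 MeasurableSpace.measurableSet_top
  change P (X ⁻¹' {T | T.verts ∈ W}) = P' (Xs ⁻¹' {T | T.verts ∈ W})
  rw [← Measure.map_apply hX hW, ← symLaw_verts_mem hshape, ← hsym, Measure.map_apply hXs hW]

instance : BorelSpace C(unitInterval, ℝ) := ⟨rfl⟩

lemma measure_contourJump_le_integral {S : Type*} [MeasurableSpace S] {Ω : Type*}
    [MeasurableSpace Ω] (P : Measure Ω) [IsFiniteMeasure P] {X : Ω → MTree S}
    (hX : Measurable X) (Z : Ω → C(unitInterval, ℝ)) {c α β : ℝ} (hc : 0 ≤ c) (hα : 0 ≤ α)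
    (hβ : 0 < β) :
    P {ω | ContourJump c α β (X ω).verts}
      ≤ ENNReal.ofReal (∫ ω, modulusTest β α (c • contourProcess (X ω), Z ω) ∂P) := by
  have hcontour : Measurable fun ω => c • contourProcess (X ω) :=
    (continuous_const_smul c).measurable.comp
      ((measurable_from_top (f := fun t : Finset Vertex =>
        interpMap (2 * t.card - 2) fun i => ((theta t i).length : ℝ))).comp
        (measurable_verts_s7.comp hX))
  have hint : Integrable (fun ω => modulusTest β α (c • contourProcess (X ω), Z ω)) P :=
    .of_bound (((continuous_cutoff β).comp (lipschitzWith_modulus α).continuous).measurable.comp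
      hcontour).aestronglyMeasurable 1
      (.of_forall fun _ => (Real.norm_eq_abs _).trans_le (abs_cutoff_le_one _ _))
  calc P {ω | ContourJump c α β (X ω).verts}
      ≤ P {ω | 1 ≤ modulusTest β α (c • contourProcess (X ω), Z ω)} :=
        measure_mono fun ω h => (h.modulusTest_eq_one hc hα hβ (Z ω)).ge
    _ = ENNReal.ofReal (P.real {ω | 1 ≤ modulusTest β α (c • contourProcess (X ω), Z ω)}) :=
        (ENNReal.ofReal_toReal (measure_ne_top _ _)).symm
    _ ≤ _ := ENNReal.ofReal_le_ofReal <| by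
        have := mul_meas_ge_le_integral_of_nonneg (.of_forall fun _ => cutoff_nonneg _ _) hint 1
        rwa [one_mul] at this

theorem statement7_general {S : Type*} [MeasurableSpace S]
    {Ω : ℕ → Type*} [∀ n, MeasurableSpace (Ω n)]
    (P : ∀ n, Measure (Ω n))
    (X : ∀ n, Ω n → MTree S) (hX : ∀ n, Measurable (X n))
    (hvalid : ∀ n, IsValidLaw ((P n).map (X n)))
    {Ω' : ℕ → Type*} [∀ n, MeasurableSpace (Ω' n)]
    (P' : ∀ n, Measure (Ω' n)) (hP' : ∀ n, IsProbabilityMeasure (P' n))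
    (Xs : ∀ n, Ω' n → MTree S) (hXs : ∀ n, Measurable (Xs n))
    (hsym : ∀ n, (P' n).map (Xs n) = symLaw ((P n).map (X n)))
    (a b : ℕ → ℝ) (hapos : ∀ n, 0 < a n)
    {Ω₀ : Type*} [MeasurableSpace Ω₀] (P₀ : Measure Ω₀) (hP₀ : IsProbabilityMeasure P₀)
    (CZ : Ω₀ → C(unitInterval, ℝ) × C(unitInterval, ℝ))
    (hconv : TendstoInDist P'
      (fun n ω => (a n • contourProcess (Xs n ω), b n • labelProcess (Xs n ω))) P₀ CZ) :
    ∀ β : ℝ, 0 < β → ∃ α : ℝ, 0 < α ∧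
      Filter.limsup (fun n => P n
        {ω | ∃ i j : ℕ, i ≤ 2 * (X n ω).verts.card - 2 ∧ j ≤ 2 * (X n ω).verts.card - 2 ∧
            i ≤ j + ⌊α * ((X n ω).verts.card : ℝ)⌋₊ ∧ j ≤ i + ⌊α * ((X n ω).verts.card : ℝ)⌋₊ ∧
            β < a n * (treeDist (theta (X n ω).verts i) (theta (X n ω).verts j) : ℝ)}) atTop
        < ENNReal.ofReal β := by
  intro β hβ
  obtain ⟨α, hα, hlim⟩ := exists_integral_modulusTest_lt P₀ CZ hβ
  refine ⟨α, hα, ?_⟩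
  have hbound : ∀ n, P n {ω | ContourJump (a n) α β (X n ω).verts}
      ≤ ENNReal.ofReal (∫ ω, modulusTest β α
          (a n • contourProcess (Xs n ω), b n • labelProcess (Xs n ω)) ∂P' n) := fun n =>
    calc P n {ω | ContourJump (a n) α β (X n ω).verts}
        = P' n {ω | ContourJump (a n) α β (Xs n ω).verts} :=
          measure_verts_mem_eq (hX n) (hXs n) (hvalid n).2.1 (hsym n) {t | ContourJump _ α β t}
      _ ≤ _ := measure_contourJump_le_integral (P' n) (hXs n) _ (hapos n).le hα.le hβ
  calc _ ≤ limsup (fun n => ENNReal.ofReal (∫ ω, modulusTest β α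
          (a n • contourProcess (Xs n ω), b n • labelProcess (Xs n ω)) ∂P' n)) atTop :=
        limsup_le_limsup (.of_forall hbound)
    _ = ENNReal.ofReal (∫ ω, modulusTest β α (CZ ω) ∂P₀) :=
        ((ENNReal.continuous_ofReal.tendsto _).comp (hconv _)).limsup_eq
    _ < ENNReal.ofReal β := (ENNReal.ofReal_lt_ofReal_iff hβ).mpr hlim

/-- Lemma 3.3. Under the hypotheses of the symmetrization theorem, for all
`β > 0` there exists `α = α(β) > 0` such that
`limsup_n P(sup_{|i-j| ≤ ⌊α|T_n|⌋} a_n · dist(θ_{T_n}(i), θ_{T_n}(j)) > β) < β`. -/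
theorem statement7 {S : Type*} [Countable S] [MeasurableSpace S]
    {Ω : ℕ → Type*} [∀ n, MeasurableSpace (Ω n)]
    (P : ∀ n, Measure (Ω n)) (hP : ∀ n, IsProbabilityMeasure (P n))
    (X : ∀ n, Ω n → MTree S) (hX : ∀ n, Measurable (X n))
    (hvalid : ∀ n, IsValidLaw ((P n).map (X n)))
    {Ω' : ℕ → Type*} [∀ n, MeasurableSpace (Ω' n)]
    (P' : ∀ n, Measure (Ω' n)) (hP' : ∀ n, IsProbabilityMeasure (P' n))
    (Xs : ∀ n, Ω' n → MTree S) (hXs : ∀ n, Measurable (Xs n))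
    (hsym : ∀ n, (P' n).map (Xs n) = symLaw ((P n).map (X n)))
    (a b : ℕ → ℝ) (hapos : ∀ n, 0 < a n) (hbpos : ∀ n, 0 < b n)
    (ha : Tendsto a atTop (𝓝 0)) (hb : Tendsto b atTop (𝓝 0))
    {Ω₀ : Type*} [MeasurableSpace Ω₀] (P₀ : Measure Ω₀) (hP₀ : IsProbabilityMeasure P₀)
    (CZ : Ω₀ → C(unitInterval, ℝ) × C(unitInterval, ℝ))
    (hconv : TendstoInDist P'
      (fun n ω => (a n • contourProcess (Xs n ω), b n • labelProcess (Xs n ω))) P₀ CZ) :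
    ∀ β : ℝ, 0 < β → ∃ α : ℝ, 0 < α ∧
      Filter.limsup (fun n => P n
        {ω | ∃ i j : ℕ, i ≤ 2 * (X n ω).verts.card - 2 ∧ j ≤ 2 * (X n ω).verts.card - 2 ∧
            i ≤ j + ⌊α * ((X n ω).verts.card : ℝ)⌋₊ ∧ j ≤ i + ⌊α * ((X n ω).verts.card : ℝ)⌋₊ ∧
            β < a n * (treeDist (theta (X n ω).verts i) (theta (X n ω).verts j) : ℝ)}) atTop
        < ENNReal.ofReal β :=
  statement7_general P X hX hvalid P' hP' Xs hXs hsym a b hapos P₀ hP₀ CZ hconv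

end TreeSym
end
end

section
/- Let t be a rooted plane tree. Then (2|t|−2) · sup over 0 ≤ s ≤ 1 of |φ_t(s) − s| ≤ 4 + height(t), where height(t) is the maximal distance from the root to a vertex of t. -/
open MeasureTheory Filter Topology
open scoped ENNReal NNReal Classical

noncomputable section

namespace TreeSym

/-! Write `N = 2|t| - 2` and `I = |t| φ_t(s)`. Since `N φ_t(s) = 2I - 2I/|t|` lies between
`2I - 2` and `2I`, it suffices to compare `2I` with `sN`. Membership of `I` in the defining set
gives `j_t(I) ≤ sN`, and `2I ≤ j_t(I) + height(t)`; maximality of `I` gives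
`sN < j_t(I + 1) ≤ 2I + 2`. -/

lemma two_mul_sub_two_le_mul_div {a n : ℝ} (hn : 0 < n) (ha : a ≤ n) :
    2 * a - 2 ≤ (2 * n - 2) * (a / n) := by
  have : a / n ≤ 1 := (div_le_one hn).2 ha
  have : (2 * n - 2) * (a / n) = 2 * a - 2 * (a / n) := by field_simp
  linarith

lemma mul_div_le_two_mul {a n : ℝ} (hn : 0 < n) (ha : 0 ≤ a) :
    (2 * n - 2) * (a / n) ≤ 2 * a := by
  have : (2 * n - 2) * (a / n) = 2 * a - 2 * (a / n) := by field_simp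
  linarith [div_nonneg ha hn.le]

section Phi

variable (t : Finset Vertex) (s : ℝ)

lemma jIdx_zero : jIdx t 0 = 0 := by
  unfold jIdx; split <;> omega

lemma jIdx_card : jIdx t t.card = 2 * t.card - 2 := by
  simp [jIdx]

lemma jIdx_le_two_mul (i : ℕ) : jIdx t i ≤ 2 * i := by
  unfold jIdx; split <;> omega

lemma lexVertex_mem {i : ℕ} (hi : i < t.card) : lexVertex t i ∈ t := by
  have hi' : i < (lexEnum t).length := by rwa [lexEnum, Finset.length_sort]
  rw [lexVertex, List.getD_eq_getElem _ _ hi']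
  exact (Finset.mem_sort _).1 (List.getElem_mem _)

lemma two_mul_le_jIdx_add_height {i : ℕ} (hi : i < t.card) :
    2 * i ≤ jIdx t i + t.sup List.length := by
  have := Finset.le_sup (f := List.length) (lexVertex_mem t hi)
  unfold jIdx; rw [if_pos hi]; omega

def phiIndex : ℕ := sSup {i : ℕ | i ≤ t.card ∧ (jIdx t i : ℝ) ≤ s * (2 * t.card - 2)}

lemma phi_eq_phiIndex_div : phi t s = phiIndex t s / t.card := rfl

lemma phiIndex_le_card : phiIndex t s ≤ t.card :=
  csSup_le' fun _ hi => hi.1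

variable {t s}

lemma jIdx_phiIndex_le (hn : 1 ≤ t.card) (hs : 0 ≤ s) :
    (jIdx t (phiIndex t s) : ℝ) ≤ s * (2 * t.card - 2) := by
  have hN : (1 : ℝ) ≤ t.card := by exact_mod_cast hn
  have hzero : 0 ∈ {i : ℕ | i ≤ t.card ∧ (jIdx t i : ℝ) ≤ s * (2 * t.card - 2)} :=
    ⟨Nat.zero_le _, by rw [jIdx_zero, Nat.cast_zero]; nlinarith⟩
  exact (Nat.sSup_mem ⟨0, hzero⟩ ⟨t.card, fun _ hi => hi.1⟩).2

lemma mul_le_two_mul_phiIndex_add_two (hn : 1 ≤ t.card) (hs : s ≤ 1) :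
    s * (2 * t.card - 2) ≤ 2 * phiIndex t s + 2 := by
  have hN : (1 : ℝ) ≤ t.card := by exact_mod_cast hn
  by_cases hlt : phiIndex t s < t.card
  · have hnext : ¬ (jIdx t (phiIndex t s + 1) : ℝ) ≤ s * (2 * t.card - 2) := fun h =>
      (le_csSup ⟨t.card, fun _ hi => hi.1⟩ ⟨hlt, h⟩ : phiIndex t s + 1 ≤ phiIndex t s).not_gt
        (Nat.lt_succ_self _)
    have hj : (jIdx t (phiIndex t s + 1) : ℝ) ≤ 2 * phiIndex t s + 2 := by
      exact_mod_cast jIdx_le_two_mul t (phiIndex t s + 1)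
    linarith
  · have hI : (t.card : ℝ) ≤ phiIndex t s := by exact_mod_cast not_lt.1 hlt
    nlinarith

lemma two_mul_card_sub_two_mul_phi_le (hn : 1 ≤ t.card) :
    (2 * t.card - 2) * phi t s ≤ jIdx t (phiIndex t s) + t.sup List.length := by
  have hN : (0 : ℝ) < t.card := by exact_mod_cast hn
  rw [phi_eq_phiIndex_div]
  rcases (phiIndex_le_card t s).lt_or_eq with hlt | heq
  · have hj : (2 * phiIndex t s : ℝ) ≤ jIdx t (phiIndex t s) + t.sup List.length := by
      exact_mod_cast two_mul_le_jIdx_add_height t hlt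
    linarith [mul_div_le_two_mul hN (Nat.cast_nonneg (phiIndex t s))]
  · rw [heq, div_self hN.ne', mul_one, jIdx_card, Nat.cast_sub (by omega)]
    push_cast
    linarith [(Nat.cast_nonneg _ : (0 : ℝ) ≤ (t.sup List.length : ℕ))]

lemma two_mul_phiIndex_sub_two_le (hn : 1 ≤ t.card) :
    2 * phiIndex t s - 2 ≤ (2 * t.card - 2) * phi t s :=
  two_mul_sub_two_le_mul_div (by exact_mod_cast hn) (by exact_mod_cast phiIndex_le_card t s)

end Phi

theorem statement14_general (t : Finset Vertex) :
    ∀ s ∈ Set.Icc (0:ℝ) 1,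
      (2 * (t.card : ℝ) - 2) * |phi t s - s| ≤ 4 + ((t.sup fun v => v.length : ℕ) : ℝ) := by
  rintro s ⟨hs0, hs1⟩
  have hH : (0 : ℝ) ≤ (t.sup List.length : ℕ) := Nat.cast_nonneg _
  rcases Nat.eq_zero_or_pos t.card with hn | hn
  · rw [hn, Nat.cast_zero]
    linarith [abs_nonneg (phi t s - s)]
  have hN : (0 : ℝ) ≤ 2 * t.card - 2 := by
    have : (1 : ℝ) ≤ t.card := by exact_mod_cast hn
    linarith
  have upper := two_mul_card_sub_two_mul_phi_le (s := s) hn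
  have lower := two_mul_phiIndex_sub_two_le (s := s) hn
  have hj := jIdx_phiIndex_le hn hs0
  have hs := mul_le_two_mul_phiIndex_add_two hn hs1
  rw [← abs_of_nonneg hN, ← abs_mul, abs_le]
  constructor <;> linarith

/-- equation (3.3) in the proof of Proposition 3.7. For a rooted plane tree
`t`, `(2|t|-2) · sup_{0 ≤ s ≤ 1} |φ_t(s) - s| ≤ 4 + height(t)`. -/
theorem statement14 (t : Finset Vertex) (ht : IsPlaneTreeSet t) :
    ∀ s ∈ Set.Icc (0:ℝ) 1,
      (2 * (t.card : ℝ) - 2) * |phi t s - s| ≤ 4 + ((t.sup fun v => v.length : ℕ) : ℝ) :=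
  statement14_general t

end TreeSym
end
end
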